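/- Let σ be a B-avoiding permutation of {1,...,n-1}. Then the permutation obtained by increasing every value of σ by 1, replacing the value 2 by 1, and appending the value 2 at the end is a B-avoiding permutation of {1,...,n}. -/

import Mathlib

/-! Apart from the appended `2`, `fBump σ` is `σ` relabelled by the monotone map `bump`, which
fixes `1` and shifts every other value up by one; a monotone relabelling creates no B-pattern.
A B-pattern ending at the appended `2` would need two earlier entries below `2`, that is, two
entries of `σ` equal to `1`. -/

/-- `l` is a permutation of `{1, ..., n}`, viewed as the sequence of its values. -/
def IsPermOf (l : List ℕ) (n : ℕ) : Prop := l.Perm (List.range' 1 n)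

/-- `l` is B-avoiding: there are no indices `a < b < c < d` with
`max {l a, l c} < min {l b, l d}`. -/
def BAvoid (l : List ℕ) : Prop :=
  ∀ a b c d : Fin l.length, a < b → b < c → c < d →
    ¬ (max (l.get a) (l.get c) < min (l.get b) (l.get d))

/-- increase all values by 1 and insert `1` immediately before the value `2`. -/
def fBefore (σ : List ℕ) : List ℕ :=
  ((σ.map (· + 1)).take ((σ.map (· + 1)).idxOf 2)) ++
    1 :: ((σ.map (· + 1)).drop ((σ.map (· + 1)).idxOf 2))

/-- increase all values by 1 and insert `1` immediately after the value `2`. -/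
def fAfter (σ : List ℕ) : List ℕ :=
  ((σ.map (· + 1)).take ((σ.map (· + 1)).idxOf 2 + 1)) ++
    1 :: ((σ.map (· + 1)).drop ((σ.map (· + 1)).idxOf 2 + 1))

/-- increase all values by 1 and append `1` at the end. -/
def fEnd (σ : List ℕ) : List ℕ := σ.map (· + 1) ++ [1]

/-- increase all values by 1, replace the value `2` by `1`, and append `2` at the end. -/
def fBump (σ : List ℕ) : List ℕ :=
  (σ.map (· + 1)).map (fun x => if x = 2 then 1 else x) ++ [2]

def bump (x : ℕ) : ℕ := if x = 1 then 1 else x + 1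

theorem bump_monotone : Monotone bump :=
  monotone_nat_of_le_succ fun x => by unfold bump; split_ifs <;> omega

theorem fBump_eq_map_bump_append (σ : List ℕ) : fBump σ = σ.map bump ++ [2] := by
  simp only [fBump, List.map_map]
  congr 1
  refine List.map_congr_left fun x _ => ?_
  simp only [Function.comp, bump]
  split_ifs <;> omega

theorem map_bump_range' (k : ℕ) : (List.range' 1 (k + 1)).map bump = 1 :: List.range' 3 k := by
  rw [List.range'_succ, List.map_cons, ← List.map_add_range' (a := 1) 2 k]
  refine congrArg _ (List.map_congr_left fun x hx => ?_)
  rw [List.mem_range'_1] at hx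
  simp only [bump]
  split_ifs <;> omega

theorem BAvoid.map {l : List ℕ} (hl : BAvoid l) {f : ℕ → ℕ} (hf : Monotone f) :
    BAvoid (l.map f) := by
  intro a b c d hab hbc hcd hlt
  have hlen := List.length_map (as := l) f
  refine hl (a.cast hlen) (b.cast hlen) (c.cast hlen) (d.cast hlen) hab hbc hcd ?_
  simp only [List.get_eq_getElem, List.getElem_map, max_lt_iff, lt_min_iff] at hlt
  simp only [List.get_eq_getElem, Fin.val_cast, max_lt_iff, lt_min_iff]
  exact hlt.imp (.imp hf.reflect_lt hf.reflect_lt) (.imp hf.reflect_lt hf.reflect_lt)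

theorem BAvoid.append_singleton {l : List ℕ} (hl : BAvoid l) {m : ℕ}
    (hm : l.Pairwise fun x y => m ≤ x ∨ m ≤ y) : BAvoid (l ++ [m]) := by
  intro a b c d hab hbc hcd hlt
  have hd_lt : (d : ℕ) < l.length + 1 := by simpa using d.isLt
  have hab : (a : ℕ) < b := hab
  have hbc : (b : ℕ) < c := hbc
  have hcd : (c : ℕ) < d := hcd
  simp only [List.get_eq_getElem, List.getElem_append_left (show (a : ℕ) < l.length by omega),
    List.getElem_append_left (show (b : ℕ) < l.length by omega),
    List.getElem_append_left (show (c : ℕ) < l.length by omega)] at hlt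
  rcases Nat.lt_or_ge d l.length with hd | hd
  · rw [List.getElem_append_left hd] at hlt
    exact hl ⟨a, by omega⟩ ⟨b, by omega⟩ ⟨c, by omega⟩ ⟨d, hd⟩ hab hbc hcd hlt
  · rw [List.getElem_append_right hd, List.getElem_singleton] at hlt
    have := List.pairwise_iff_getElem.mp hm a c (by omega) (by omega) (by omega)
    omega

theorem IsPermOf.map_bump_append_two {σ : List ℕ} {k : ℕ} (hσ : IsPermOf σ (k + 1)) :
    IsPermOf (σ.map bump ++ [2]) (k + 2) := by
  have hmap : (σ.map bump).Perm (1 :: List.range' 3 k) := map_bump_range' k ▸ hσ.map bump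
  exact (hmap.append_right [2]).trans ((List.perm_append_singleton 2 _).cons 1)

theorem IsPermOf.pairwise_map_bump {σ : List ℕ} {k : ℕ} (hσ : IsPermOf σ k) :
    (σ.map bump).Pairwise fun x y => 2 ≤ x ∨ 2 ≤ y := by
  have hpos : ∀ x ∈ σ, 1 ≤ x := fun x hx => (List.mem_range'_1.mp (hσ.mem_iff.mp hx)).1
  refine List.pairwise_map.mpr (((hσ.nodup_iff.mpr List.nodup_range').imp_of_mem) ?_)
  intro x y hx hy hxy
  have := hpos x hx
  have := hpos y hy
  simp only [bump]
  split_ifs <;> omega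

theorem stmt6 (n : ℕ) (hn : 2 ≤ n) (σ : List ℕ)
    (hσ : IsPermOf σ (n - 1)) (hB : BAvoid σ) :
    IsPermOf (fBump σ) n ∧ BAvoid (fBump σ) := by
  obtain ⟨k, rfl⟩ : ∃ k, n = k + 2 := ⟨n - 2, by omega⟩
  replace hσ : IsPermOf σ (k + 1) := hσ
  rw [fBump_eq_map_bump_append]
  exact ⟨hσ.map_bump_append_two, (hB.map bump_monotone).append_singleton hσ.pairwise_map_bump⟩
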